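/- Let δ = ±1, let k₀, k₁, k₂ ∈ ℝ \ {0}, let η ∈ ℝ, and let ψ : ℝ → ℝ be a smooth strictly monotone function (ψ′ ≠ 0 everywhere). Let u, v : U → ℝ be smooth functions on an open set U ⊆ ℝ² satisfying u_{xt} = k₁e^{k₀u}ψ(v_x), v_{xt} = k₁(δk₂^{−2} − k₀²)e^{k₀u}·u_x/ψ′(v_x) on U. Define F₁₁ = k₂^{−1}u_x, F₂₁ = η, F₃₁ = ηk₀k₂ + ψ(v_x), F₁₂ = 0, F₂₂ = −k₁k₂^{−1}e^{k₀u}, F₃₂ = −k₀k₁e^{k₀u}. Then on U the structure equations hold: −∂_t F₁₁ + ∂_x F₁₂ = F₃₁F₂₂ − F₃₂F₂₁, −∂_t F₂₁ + ∂_x F₂₂ = F₁₁F₃₂ − F₁₂F₃₁, −∂_t F₃₁ + ∂_x F₃₂ = δ(F₁₁F₂₂ − F₁₂F₂₁); hence this system describes pseudospherical surfaces (δ = 1), resp. spherical surfaces (δ = −1), with these associated functions. -/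

import Mathlib

/-! The associated functions are all of the form `g ∘ w` with `w ∈ {u, u_x, v_x}` and `g` a
function of one variable, so the structure equations reduce, by the chain rule, to the two
equations of the system and a ring identity. -/

open Real

/-- Partial derivative in the `x` direction of a function on the `(x, t)` plane. -/
noncomputable def pdx (f : ℝ × ℝ → ℝ) (p : ℝ × ℝ) : ℝ := fderiv ℝ f p (1, 0)

/-- Partial derivative in the `t` direction of a function on the `(x, t)` plane. -/
noncomputable def pdt (f : ℝ × ℝ → ℝ) (p : ℝ × ℝ) : ℝ := fderiv ℝ f p (0, 1)

/-- The structure equations of a surface of constant Gaussian curvature `-δ`. -/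
def StructEqs (δ : ℝ) (U : Set (ℝ × ℝ)) (F11 F12 F21 F22 F31 F32 : ℝ × ℝ → ℝ) : Prop :=
  ∀ p ∈ U,
    -(pdt F11 p) + pdx F12 p = F31 p * F22 p - F32 p * F21 p ∧
    -(pdt F21 p) + pdx F22 p = F11 p * F32 p - F12 p * F31 p ∧
    -(pdt F31 p) + pdx F32 p = δ * (F11 p * F22 p - F12 p * F21 p)

section ChainRule

variable {E : Type*} [NormedAddCommGroup E] [NormedSpace ℝ E]

theorem fderiv_comp_apply_of_hasDerivAt {g : ℝ → ℝ} {g' : ℝ} {f : E → ℝ} {p : E}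
    (hg : HasDerivAt g g' (f p)) (hf : DifferentiableAt ℝ f p) (w : E) :
    fderiv ℝ (fun q => g (f q)) p w = g' * fderiv ℝ f p w := by
  rw [← Function.comp_def g f, (hg.comp_hasFDerivAt p hf.hasFDerivAt).fderiv]
  rfl

end ChainRule

section PartialDerivatives

variable {f : ℝ × ℝ → ℝ} {g : ℝ → ℝ} {g' : ℝ} {p : ℝ × ℝ}

theorem pdx_comp (hg : HasDerivAt g g' (f p)) (hf : DifferentiableAt ℝ f p) :
    pdx (fun q => g (f q)) p = g' * pdx f p :=
  fderiv_comp_apply_of_hasDerivAt hg hf _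

theorem pdt_comp (hg : HasDerivAt g g' (f p)) (hf : DifferentiableAt ℝ f p) :
    pdt (fun q => g (f q)) p = g' * pdt f p :=
  fderiv_comp_apply_of_hasDerivAt hg hf _

@[simp]
theorem pdx_const (c : ℝ) : pdx (fun _ => c) p = 0 := by
  simp [pdx]

@[simp]
theorem pdt_const (c : ℝ) : pdt (fun _ => c) p = 0 := by
  simp [pdt]

theorem differentiableAt_pdx {n : WithTop ℕ∞} {U : Set (ℝ × ℝ)} (hf : ContDiffOn ℝ n f U)
    (hn : 2 ≤ n) (hU : IsOpen U) (hp : p ∈ U) : DifferentiableAt ℝ (pdx f) p := by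
  have hfx : ContDiffOn ℝ 1 (pdx f) U :=
    (hf.fderiv_of_isOpen hU (m := 1) (by simpa [one_add_one_eq_two] using hn)).clm_apply
      contDiffOn_const
  exact (hfx.differentiableOn one_ne_zero).differentiableAt (hU.mem_nhds hp)

end PartialDerivatives

theorem corollary_exp_family_describes_pss_ss_general (δ k0 k1 k2 η : ℝ)
    (hk2 : k2 ≠ 0)
    (ψ : ℝ → ℝ) (hψ : ContDiff ℝ (⊤ : ℕ∞) ψ)
    (hψ' : ∀ s : ℝ, deriv ψ s ≠ 0)
    (U : Set (ℝ × ℝ)) (hU : IsOpen U)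
    (u v : ℝ × ℝ → ℝ)
    (hu : ContDiffOn ℝ (⊤ : ℕ∞) u U) (hv : ContDiffOn ℝ (⊤ : ℕ∞) v U)
    (heq1 : ∀ p ∈ U, pdt (pdx u) p = k1 * Real.exp (k0 * u p) * ψ (pdx v p))
    (heq2 : ∀ p ∈ U, pdt (pdx v) p =
      k1 * (δ * (k2 ^ 2)⁻¹ - k0 ^ 2) * Real.exp (k0 * u p) * pdx u p / deriv ψ (pdx v p)) :
    StructEqs δ U
      (fun q => k2⁻¹ * pdx u q)
      (fun _ => 0)
      (fun _ => η)
      (fun q => -(k1 * k2⁻¹) * Real.exp (k0 * u q))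
      (fun q => η * k0 * k2 + ψ (pdx v q))
      (fun q => -(k0 * k1) * Real.exp (k0 * u q)) := by
  intro p hp
  have hu_p : DifferentiableAt ℝ u p :=
    (hu.differentiableOn (by simp)).differentiableAt (hU.mem_nhds hp)
  have hux_p := differentiableAt_pdx hu (WithTop.coe_le_coe.2 le_top) hU hp
  have hvx_p := differentiableAt_pdx hv (WithTop.coe_le_coe.2 le_top) hU hp
  have hexp (c : ℝ) : HasDerivAt (fun s => c * exp (k0 * s)) (c * (exp (k0 * u p) * k0)) (u p) :=
    (((hasDerivAt_id' _).const_mul k0).exp.congr_deriv (by simp)).const_mul c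
  have hψ_p : HasDerivAt (fun s => η * k0 * k2 + ψ s) (deriv ψ (pdx v p)) (pdx v p) :=
    ((hψ.differentiable (by simp) _).hasDerivAt).const_add _
  refine ⟨?_, ?_, ?_⟩
  · rw [pdt_comp ((hasDerivAt_id' _).const_mul k2⁻¹) hux_p, heq1 p hp, pdx_const]
    linear_combination (k0 * k1 * η * exp (k0 * u p)) * mul_inv_cancel₀ hk2
  · rw [pdt_const, pdx_comp (hexp _) hu_p]
    ring
  · rw [pdt_comp hψ_p hvx_p, heq2 p hp, pdx_comp (hexp _) hu_p,
      mul_div_cancel₀ _ (hψ' (pdx v p))]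
    ring

/-- The family `u_xt = k₁e^{k₀u}ψ(v_x)`, `v_xt = k₁(δk₂⁻² − k₀²)e^{k₀u}u_x/ψ′(v_x)`
describes pseudospherical surfaces (`δ = 1`), resp. spherical surfaces (`δ = −1`). -/
theorem corollary_exp_family_describes_pss_ss (δ k0 k1 k2 η : ℝ)
    (hδ : δ = 1 ∨ δ = -1) (hk0 : k0 ≠ 0) (hk1 : k1 ≠ 0) (hk2 : k2 ≠ 0)
    (ψ : ℝ → ℝ) (hψ : ContDiff ℝ (⊤ : ℕ∞) ψ)
    (hψ' : ∀ s : ℝ, deriv ψ s ≠ 0) (hψmono : StrictMono ψ ∨ StrictAnti ψ)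
    (U : Set (ℝ × ℝ)) (hU : IsOpen U)
    (u v : ℝ × ℝ → ℝ)
    (hu : ContDiffOn ℝ (⊤ : ℕ∞) u U) (hv : ContDiffOn ℝ (⊤ : ℕ∞) v U)
    (heq1 : ∀ p ∈ U, pdt (pdx u) p = k1 * Real.exp (k0 * u p) * ψ (pdx v p))
    (heq2 : ∀ p ∈ U, pdt (pdx v) p =
      k1 * (δ * (k2 ^ 2)⁻¹ - k0 ^ 2) * Real.exp (k0 * u p) * pdx u p / deriv ψ (pdx v p)) :
    StructEqs δ U
      (fun q => k2⁻¹ * pdx u q)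
      (fun _ => 0)
      (fun _ => η)
      (fun q => -(k1 * k2⁻¹) * Real.exp (k0 * u q))
      (fun q => η * k0 * k2 + ψ (pdx v q))
      (fun q => -(k0 * k1) * Real.exp (k0 * u q)) :=
  corollary_exp_family_describes_pss_ss_general δ k0 k1 k2 η hk2 ψ hψ hψ' U hU u v hu hv heq1 heq2
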